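/- For every γ ∈ (0,1) there exists an integer K₂ (depending only on γ) such that for all integers k ≥ K₂, (k+1)^γ + 2γ(k+2)^{γ−1} ≤ k^{γ−1}(k + 3γ); equivalently, the coefficient A_k = (k/(k+3γ))² · { ((k+1)^γ + 2γ(k+2)^{γ−1})² − k^{2(γ−1)}(k+3γ)² } is ≤ 0 for all k ≥ K₂. -/

import Mathlib

open Set Filter Topology

/-! Bernoulli's inequality gives `(k+1)^γ ≤ k^γ + γ k^(γ-1)`, and `(k+2)^(γ-1) ≤ k^(γ-1)` since
`γ - 1 ≤ 0`; adding the two yields the bound with `k^(γ-1)(k + 3γ) = k^γ + 3γ k^(γ-1)` for every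
`k ≥ 1`. Squaring it gives the sign of `A_k`. -/

open Real

theorem rpow_add_le_rpow_add_mul_rpow_sub_one_mul {x y p : ℝ} (hx : 0 < x) (hy : -x ≤ y)
    (hp0 : 0 ≤ p) (hp1 : p ≤ 1) : (x + y) ^ p ≤ x ^ p + p * x ^ (p - 1) * y := by
  have hyx : -1 ≤ y / x := by rw [le_div_iff₀ hx]; linarith
  have hbern : (1 + y / x) ^ p ≤ 1 + p * (y / x) :=
    rpow_one_add_le_one_add_mul_self hyx hp0 hp1
  calc (x + y) ^ p = x ^ p * (1 + y / x) ^ p := by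
        rw [← mul_rpow hx.le (by linarith), mul_one_add, mul_div_cancel₀ _ hx.ne']
    _ ≤ x ^ p * (1 + p * (y / x)) := mul_le_mul_of_nonneg_left hbern (rpow_nonneg hx.le p)
    _ = x ^ p + p * x ^ (p - 1) * y := by
        rw [rpow_sub_one hx.ne']; field_simp

theorem add_one_rpow_add_two_mul_add_two_rpow_le {x γ : ℝ} (hx : 0 < x) (hγ0 : 0 ≤ γ)
    (hγ1 : γ ≤ 1) :
    (x + 1) ^ γ + 2 * γ * (x + 2) ^ (γ - 1) ≤ x ^ (γ - 1) * (x + 3 * γ) := by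
  have hfirst : (x + 1) ^ γ ≤ x ^ γ + γ * x ^ (γ - 1) := by
    simpa using rpow_add_le_rpow_add_mul_rpow_sub_one_mul (y := 1) hx (by linarith) hγ0 hγ1
  have hsecond : (x + 2) ^ (γ - 1) ≤ x ^ (γ - 1) :=
    rpow_le_rpow_of_nonpos hx (by linarith) (by linarith)
  have hsplit : x ^ (γ - 1) * (x + 3 * γ) = x ^ γ + 3 * γ * x ^ (γ - 1) := by
    rw [mul_add, ← rpow_add_one hx.ne', sub_add_cancel]; ring
  rw [hsplit]
  linarith [mul_le_mul_of_nonneg_left hsecond hγ0]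

theorem coeff_A_eventually_nonpositive
    (γ : ℝ) (hγ : γ ∈ Set.Ioo (0 : ℝ) 1) :
    ∃ K₂ : ℕ, ∀ k : ℕ, K₂ ≤ k →
      (((k : ℝ) + 1) ^ γ + 2 * γ * ((k : ℝ) + 2) ^ (γ - 1) ≤
          (k : ℝ) ^ (γ - 1) * ((k : ℝ) + 3 * γ)) ∧
      ((k : ℝ) / ((k : ℝ) + 3 * γ)) ^ 2 *
          ((((k : ℝ) + 1) ^ γ + 2 * γ * ((k : ℝ) + 2) ^ (γ - 1)) ^ 2 -
            (k : ℝ) ^ (2 * (γ - 1)) * ((k : ℝ) + 3 * γ) ^ 2) ≤ 0 := by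
  obtain ⟨hγ0, hγ1⟩ := hγ
  refine ⟨1, fun k hk => ?_⟩
  have hkpos : (0 : ℝ) < k := by exact_mod_cast hk
  have hbound := add_one_rpow_add_two_mul_add_two_rpow_le hkpos hγ0.le hγ1.le
  have hlhs_nonneg : 0 ≤ ((k : ℝ) + 1) ^ γ + 2 * γ * ((k : ℝ) + 2) ^ (γ - 1) :=
    add_nonneg (by positivity) (mul_nonneg (by positivity) (by positivity))
  refine ⟨hbound, mul_nonpos_of_nonneg_of_nonpos (sq_nonneg _) ?_⟩
  rw [mul_comm 2 (γ - 1), rpow_mul hkpos.le, rpow_two, ← mul_pow, sub_nonpos]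
  exact pow_le_pow_left₀ hlhs_nonneg hbound 2
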